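/- Let (c(t))_{t∈ℝ} be a complex-valued cosine function. Then for all s, t ∈ ℝ, (1 − c(s−t))(1 − c(s+t)) = (c(s) − c(t))². -/

import Mathlib

open Filter Topology

/-- A complex-valued cosine function: `c 0 = 1` and
`c (s+t) + c (s-t) = 2 * c s * c t` for all real `s, t`. -/
def IsScalarCosineFunction (c : ℝ → ℂ) : Prop :=
  c 0 = 1 ∧ ∀ s t : ℝ, c (s + t) + c (s - t) = 2 * c s * c t

/-!
Expanding the left-hand side leaves the sum and the product of `c (s + t)` and `c (s - t)`.
The sum is `2 c(s) c(t)` by the functional equation; the equation at `(s + t, s - t)` and the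
double-angle formula `c (2s) = 2 c(s)² - 1` turn the product into `c(s)² + c(t)² - 1`.
-/

namespace IsScalarCosineFunction

variable {c : ℝ → ℂ} (hc : IsScalarCosineFunction c)
include hc

theorem apply_add_add_apply_sub (s t : ℝ) : c (s + t) + c (s - t) = 2 * c s * c t :=
  hc.2 s t

theorem apply_two_mul (s : ℝ) : c (2 * s) = 2 * c s ^ 2 - 1 := by
  have h := hc.apply_add_add_apply_sub s s
  rw [← two_mul, sub_self, hc.1] at h
  linear_combination h

theorem apply_add_mul_apply_sub (s t : ℝ) :
    c (s + t) * c (s - t) = c s ^ 2 + c t ^ 2 - 1 := by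
  have h := hc.apply_add_add_apply_sub (s + t) (s - t)
  rw [show s + t + (s - t) = 2 * s by ring, show s + t - (s - t) = 2 * t by ring,
    hc.apply_two_mul, hc.apply_two_mul] at h
  linear_combination -h / 2

end IsScalarCosineFunction

theorem cosine_identity (c : ℝ → ℂ) (hc : IsScalarCosineFunction c) (s t : ℝ) :
    (1 - c (s - t)) * (1 - c (s + t)) = (c s - c t) ^ 2 := by
  calc (1 - c (s - t)) * (1 - c (s + t))
      = 1 - (c (s + t) + c (s - t)) + c (s + t) * c (s - t) := by ring
    _ = (c s - c t) ^ 2 := by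
      rw [hc.apply_add_add_apply_sub, hc.apply_add_mul_apply_sub]
      ring
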